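/- Let · be a partial action of the Hopf algebra A on R, let g ∈ A be a grouplike element with g·1_R = 0, let q ∈ k^× and w ∈ R, and define D_j(a,r) := Σ_{k=0}^{j} (−1)^k · q^{−k(k−1)/2} · binom(j,k)_{q⁻¹} · w^{j−k} · ((g^k a)·r) · w^k for j ∈ ℕ₀, a ∈ A, r ∈ R. Then for all j ∈ ℕ₀, a ∈ A and r, s ∈ R: D_j(a, rs) = Σ_{(a)} Σ_{ℓ=0}^{j} binom(j,ℓ)_{q⁻¹} · D_{j−ℓ}(g^ℓ a₁, r) · D_ℓ(a₂, s). (This expresses that the linear extension x^j a · r := D_j(a,r) to the Hopf–Ore extension A[x,σ], where Δ(x^j a) = Σ_ℓ binom(j,ℓ)_{q⁻¹} x^{j−ℓ}g^ℓ a₁ ⊗ x^ℓ a₂, satisfies the multiplicativity axiom (PA.2).) -/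
import Mathlib


open TensorProduct

noncomputable section

/-- Gaussian ($q$-)binomial coefficients, defined by the recursion
`binom(0,0)_q = 1`, `binom(n,m)_q = 0` for `m > n`,
`binom(n,m)_q = binom(n-1,m)_q + q^(n-m) * binom(n-1,m-1)_q`. -/
def qbinom {K : Type*} [CommRing K] (q : K) : ℕ → ℕ → K
  | 0, 0 => 1
  | 0, _ + 1 => 0
  | n + 1, 0 => qbinom q n 0
  | n + 1, m + 1 => qbinom q n (m + 1) + q ^ (n - m) * qbinom q n m

/-- A (left) partial action of a bialgebra `H` on an algebra `R`:
(PA.1) `1 · r = r`; (PA.2) `h · (r*s) = Σ (h₁ · r)(h₂ · s)`;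
(PA.3) `h · (m · r) = Σ (h₁ · 1)(h₂m · r)`. -/
structure PartialAction (k H R : Type*) [CommSemiring k] [Semiring H] [Bialgebra k H]
    [Semiring R] [Algebra k R] where
  act : H →ₗ[k] R →ₗ[k] R
  unit_act : ∀ r : R, act 1 r = r
  mul_act : ∀ (h : H) (r s : R),
    act h (r * s) = TensorProduct.lift
      ((LinearMap.mul k R).compl₁₂ (act.flip r) (act.flip s)) (Coalgebra.comul (R := k) h)
  act_act : ∀ (h m : H) (r : R),
    act h (act m r) = TensorProduct.lift
      ((LinearMap.mul k R).compl₁₂ (act.flip 1)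
        ((act.flip r).comp (LinearMap.mulRight k m))) (Coalgebra.comul (R := k) h)

/-- Symmetry (PA.S): `h · (m · r) = Σ (h₁m · r)(h₂ · 1)`. -/
def PartialAction.IsSymmetric {k H R : Type*} [CommSemiring k] [Semiring H] [Bialgebra k H]
    [Semiring R] [Algebra k R] (P : PartialAction k H R) : Prop :=
  ∀ (h m : H) (r : R),
    P.act h (P.act m r) = TensorProduct.lift
      ((LinearMap.mul k R).compl₁₂ ((P.act.flip r).comp (LinearMap.mulRight k m))
        (P.act.flip 1)) (Coalgebra.comul (R := k) h)

/-- A grouplike element: `Δ g = g ⊗ g` and `ε g = 1`. -/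
def IsGrouplike (k : Type*) {H : Type*} [CommSemiring k] [Semiring H] [Bialgebra k H]
    (g : H) : Prop :=
  Coalgebra.comul (R := k) g = g ⊗ₜ[k] g ∧ Coalgebra.counit (R := k) g = 1

/-- A `(1,g)`-primitive element: `Δ x = x ⊗ 1 + g ⊗ x`. -/
def IsOneGPrimitive (k : Type*) {H : Type*} [CommSemiring k] [Semiring H] [Bialgebra k H]
    (g x : H) : Prop :=
  Coalgebra.comul (R := k) x = x ⊗ₜ[k] (1 : H) + g ⊗ₜ[k] x

end

/-- The linear map `a ↦ D_j(a,r) = Σ_{i=0}^{j} (-1)^i q^{-i(i-1)/2} binom(j,i)_{q⁻¹}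
w^{j-i} ((gⁱa) · r) wⁱ`. -/
def DL {k A R : Type*} [Field k] [Ring A] [Algebra k A] [Ring R] [Algebra k R]
    (act : A →ₗ[k] R →ₗ[k] R) (g : A) (w : R) (q : k) (j : ℕ) (r : R) : A →ₗ[k] R :=
  ∑ i ∈ Finset.range (j + 1),
    ((-1 : k) ^ i * q⁻¹ ^ (i * (i - 1) / 2) * qbinom q⁻¹ j i) •
      ((LinearMap.mulRight k (w ^ i)).comp
        ((LinearMap.mulLeft k (w ^ (j - i))).comp
          ((act.flip r).comp (LinearMap.mulLeft k (g ^ i)))))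


lemma qbinom_zero' {K : Type*} [CommRing K] (q : K) : ∀ n, qbinom q n 0 = 1
  | 0 => rfl
  | n + 1 => by rw [qbinom]; exact qbinom_zero' q n

lemma qbinom_eq_zero {K : Type*} [CommRing K] (q : K) : ∀ n m, n < m → qbinom q n m = 0
  | 0, m + 1, _ => rfl
  | n + 1, m + 1, h => by
      rw [qbinom, qbinom_eq_zero q n (m+1) (by omega), qbinom_eq_zero q n m (by omega)]
      ring

def Cc {k : Type*} [Field k] (q : k) (j i : ℕ) : k :=
  (-1 : k) ^ i * q⁻¹ ^ (i * (i - 1) / 2) * qbinom q⁻¹ j i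

lemma Cc_zero {k : Type*} [Field k] (q : k) (j : ℕ) : Cc q j 0 = 1 := by
  simp [Cc, qbinom_zero']

lemma Cc_eq_zero {k : Type*} [Field k] (q : k) {j i : ℕ} (h : j < i) : Cc q j i = 0 := by
  simp [Cc, qbinom_eq_zero _ _ _ h]

lemma tri_succ (i : ℕ) : (i + 1) * i / 2 = i * (i - 1) / 2 + i := by
  cases i with
  | zero => rfl
  | succ n =>
    have : (n + 2) * (n + 1) = (n + 1) * n + 2 * (n + 1) := by ring
    rw [Nat.succ_sub_one, this, Nat.add_mul_div_left _ _ (by norm_num : 0 < 2)]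

lemma Cc_succ_succ {k : Type*} [Field k] (q : k) (j i : ℕ) :
    Cc q (j + 1) (i + 1) = Cc q j (i + 1) - q⁻¹ ^ j * Cc q j i := by
  by_cases h : j < i
  · rw [Cc_eq_zero q (by omega), Cc_eq_zero q (by omega), Cc_eq_zero q h]
    ring
  · have hij : i ≤ j := by omega
    have e1 : (i + 1) * (i + 1 - 1) / 2 = i * (i - 1) / 2 + i := by
      simpa using tri_succ i
    have e2 : i * (i - 1) / 2 + i + (j - i) = i * (i - 1) / 2 + j := by omega
    rw [Cc, Cc, Cc, qbinom, e1]
    rw [mul_add, pow_succ]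
    rw [show ((-1 : k) ^ i * -1 * q⁻¹ ^ (i * (i - 1) / 2 + i) *
        (q⁻¹ ^ (j - i) * qbinom q⁻¹ j i)) =
      -((-1 : k) ^ i * (q⁻¹ ^ (i * (i - 1) / 2 + i) * q⁻¹ ^ (j - i)) * qbinom q⁻¹ j i) from by
        ring]
    rw [← pow_add, e2, pow_add]
    ring

section
variable {k A R : Type*} [Field k] [Ring A] [Algebra k A] [Ring R] [Algebra k R]
  (act : A →ₗ[k] R →ₗ[k] R) (g : A) (w : R) (q : k)

lemma DL_apply (j : ℕ) (r : R) (a : A) :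
    DL act g w q j r a =
      ∑ i ∈ Finset.range (j + 1), Cc q j i • (w ^ (j - i) * act (g ^ i * a) r * w ^ i) := by
  simp [DL, Cc, LinearMap.sum_apply]

lemma genrec (u : ℕ → R) (j : ℕ) :
    ∑ i ∈ Finset.range (j + 2), Cc q (j + 1) i • (w ^ (j + 1 - i) * u i * w ^ i)
      = w * ∑ i ∈ Finset.range (j + 1), Cc q j i • (w ^ (j - i) * u i * w ^ i)
        - q⁻¹ ^ j •
          ((∑ i ∈ Finset.range (j + 1), Cc q j i • (w ^ (j - i) * u (i + 1) * w ^ i)) * w) := by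
  rw [Finset.sum_range_succ' _ (j + 1)]
  simp only [Nat.add_sub_add_right, Cc_succ_succ, sub_smul, Finset.sum_sub_distrib]
  rw [Finset.mul_sum, Finset.sum_mul, Finset.smul_sum]
  have h1 : ∀ i ∈ Finset.range (j + 1),
      (q⁻¹ ^ j * Cc q j i) • (w ^ (j - i) * u (i + 1) * w ^ (i + 1)) =
        q⁻¹ ^ j • (Cc q j i • (w ^ (j - i) * u (i + 1) * w ^ i) * w) := by
    intro i _
    rw [smul_mul_assoc, smul_smul, pow_succ, ← mul_assoc]
  rw [show (∑ i ∈ Finset.range (j + 1),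
      (q⁻¹ ^ j * Cc q j i) • (w ^ (j - i) * u (i + 1) * w ^ (i + 1))) =
    ∑ i ∈ Finset.range (j + 1),
      q⁻¹ ^ j • (Cc q j i • (w ^ (j - i) * u (i + 1) * w ^ i) * w) from
    Finset.sum_congr rfl h1]
  have key : (∑ i ∈ Finset.range (j + 1),
      Cc q j (i + 1) • (w ^ (j - i) * u (i + 1) * w ^ (i + 1))) +
        Cc q (j + 1) 0 • (w ^ (j + 1 - 0) * u 0 * w ^ 0)
      = ∑ i ∈ Finset.range (j + 1), w * (Cc q j i • (w ^ (j - i) * u i * w ^ i)) := by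
    have h2 : ∀ i ∈ Finset.range (j + 1),
        w * (Cc q j i • (w ^ (j - i) * u i * w ^ i)) =
          Cc q j i • (w ^ (j + 1 - i) * u i * w ^ i) := by
      intro i hi
      rw [mul_smul_comm, ← mul_assoc, ← mul_assoc, ← pow_succ',
        show j - i + 1 = j + 1 - i from by
          have := Finset.mem_range.mp hi; omega]
    rw [Finset.sum_congr rfl h2]
    conv_rhs => rw [Finset.sum_range_succ' _ j]
    rw [Finset.sum_range_succ (fun i => Cc q j (i + 1) • (w ^ (j - i) * u (i + 1) * w ^ (i + 1))) j,
      Cc_eq_zero q (Nat.lt_succ_self j), zero_smul, add_zero, Cc_zero, Cc_zero]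
    congr 1
    apply Finset.sum_congr rfl
    intro i hi
    rw [show j + 1 - (i + 1) = j - i from by omega]
  rw [sub_add_eq_add_sub, key]

lemma qbinom_succ_succ {K : Type*} [CommRing K] (q : K) (n m : ℕ) :
    qbinom q (n+1) (m+1) = qbinom q n (m+1) + q ^ (n - m) * qbinom q n m := by
  rw [qbinom]

lemma Drec (j : ℕ) (r : R) (a : A) :
    DL act g w q (j + 1) r a
      = w * DL act g w q j r a - q⁻¹ ^ j • (DL act g w q j r (g * a) * w) := by
  rw [DL_apply, DL_apply, DL_apply]
  have h := genrec w q (fun i => act (g ^ i * a) r) j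
  rw [h]
  congr 2
  congr 1
  apply Finset.sum_congr rfl
  intro i _
  rw [show g ^ i * (g * a) = g ^ (i + 1) * a from by rw [← mul_assoc, ← pow_succ]]

lemma Drec' (j : ℕ) (r : R) (a : A) :
    w * DL act g w q j r a
      = DL act g w q (j + 1) r a + q⁻¹ ^ j • (DL act g w q j r (g * a) * w) := by
  rw [Drec, sub_add_cancel]

lemma keylemma (r s : R) : ∀ (j : ℕ) (x y : A),
    ∑ i ∈ Finset.range (j + 1),
      Cc q j i • (w ^ (j - i) * (act (g ^ i * x) r * act (g ^ i * y) s) * w ^ i)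
    = ∑ l ∈ Finset.range (j + 1),
        qbinom q⁻¹ j l • (DL act g w q (j - l) r (g ^ l * x) * DL act g w q l s y) := by
  intro j
  induction j with
  | zero =>
    intro x y
    simp [DL_apply, Cc_zero, qbinom_zero']
  | succ j ih =>
    intro x y
    have h := genrec w q (fun i => act (g ^ i * x) r * act (g ^ i * y) s) j
    rw [h]
    have h2 : (∑ i ∈ Finset.range (j + 1),
        Cc q j i • (w ^ (j - i) * (act (g ^ (i+1) * x) r * act (g ^ (i+1) * y) s) * w ^ i))
        = ∑ i ∈ Finset.range (j + 1),
        Cc q j i • (w ^ (j - i) * (act (g ^ i * (g * x)) r * act (g ^ i * (g * y)) s) * w ^ i) := by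
      apply Finset.sum_congr rfl
      intro i _
      rw [show g ^ i * (g * x) = g ^ (i + 1) * x from by rw [← mul_assoc, ← pow_succ],
        show g ^ i * (g * y) = g ^ (i + 1) * y from by rw [← mul_assoc, ← pow_succ]]
    rw [h2, ih x y, ih (g * x) (g * y)]
    rw [Finset.mul_sum, Finset.sum_mul, Finset.smul_sum, ← Finset.sum_sub_distrib]
    have hterm : ∀ l ∈ Finset.range (j + 1),
        w * (qbinom q⁻¹ j l • (DL act g w q (j - l) r (g ^ l * x) * DL act g w q l s y))
          - q⁻¹ ^ j • (qbinom q⁻¹ j l •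
              (DL act g w q (j - l) r (g ^ l * (g * x)) * DL act g w q l s (g * y)) * w)
        = qbinom q⁻¹ j l • (DL act g w q (j + 1 - l) r (g ^ l * x) * DL act g w q l s y)
          + (q⁻¹ ^ (j - l) * qbinom q⁻¹ j l) •
              (DL act g w q (j - l) r (g ^ (l + 1) * x) * DL act g w q (l + 1) s y) := by
      intro l hl
      have hl' : l ≤ j := by have := Finset.mem_range.mp hl; omega
      rw [mul_smul_comm, ← mul_assoc, Drec' act g w q (j - l) r (g ^ l * x),
        show j - l + 1 = j + 1 - l from by omega,
        show g * (g ^ l * x) = g ^ (l + 1) * x from by rw [← mul_assoc, ← pow_succ'],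
        show g ^ l * (g * x) = g ^ (l + 1) * x from by rw [← mul_assoc, ← pow_succ],
        show (q⁻¹ : k) ^ j = q⁻¹ ^ (j - l) * q⁻¹ ^ l from by
          rw [← pow_add, Nat.sub_add_cancel hl'],
        add_mul, smul_mul_assoc, mul_assoc (DL act g w q (j - l) r (g ^ (l + 1) * x)) w _,
        Drec' act g w q l s y]
      simp only [mul_add, smul_add, mul_smul_comm, smul_smul, smul_mul_assoc, mul_assoc]
      module
    rw [Finset.sum_congr rfl hterm, Finset.sum_add_distrib]
    -- final reindexing identity
    conv_rhs => rw [Finset.sum_range_succ' _ (j + 1)]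
    simp only [qbinom_succ_succ, add_smul, Finset.sum_add_distrib, Nat.add_sub_add_right]
    have h3 : (∑ l ∈ Finset.range (j + 1),
        qbinom q⁻¹ j l • (DL act g w q (j + 1 - l) r (g ^ l * x) * DL act g w q l s y))
        = (∑ l ∈ Finset.range (j + 1), qbinom q⁻¹ j (l + 1) •
            (DL act g w q (j - l) r (g ^ (l + 1) * x) * DL act g w q (l + 1) s y))
          + qbinom q⁻¹ (j + 1) 0 •
            (DL act g w q (j + 1 - 0) r (g ^ 0 * x) * DL act g w q 0 s y) := by
      conv_lhs => rw [Finset.sum_range_succ' _ j]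
      rw [Finset.sum_range_succ (fun l => qbinom q⁻¹ j (l + 1) •
            (DL act g w q (j - l) r (g ^ (l + 1) * x) * DL act g w q (l + 1) s y)) j,
        qbinom_eq_zero _ _ _ (Nat.lt_succ_self j), zero_smul, add_zero,
        qbinom_zero', qbinom_zero']
      congr 1
      apply Finset.sum_congr rfl
      intro l _
      rw [show j + 1 - (l + 1) = j - l from by omega]
    rw [h3]
    abel

end

/-- multiplicativity (PA.2) for the extension `xʲa · r := D_j(a,r)` to the
Hopf–Ore extension: `D_j(a, rs) = Σ_{(a)} Σ_ℓ binom(j,ℓ)_{q⁻¹} D_{j-ℓ}(gˡa₁, r) D_ℓ(a₂, s)`. -/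
theorem stmt11 {k A R : Type*} [Field k] [IsAlgClosed k] [CharZero k]
    [Ring A] [HopfAlgebra k A] [Ring R] [Algebra k R]
    (P : PartialAction k A R) (g : A) (hg : IsGrouplike k g) (hg0 : P.act g 1 = 0)
    (q : k) (hq : q ≠ 0) (w : R) :
    ∀ (j : ℕ) (a : A) (r s : R),
      DL P.act g w q j (r * s) a =
        ∑ l ∈ Finset.range (j + 1), qbinom q⁻¹ j l •
          TensorProduct.lift ((LinearMap.mul k R).compl₁₂
              ((DL P.act g w q (j - l) r).comp (LinearMap.mulLeft k (g ^ l)))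
              (DL P.act g w q l s))
            (Coalgebra.comul (R := k) a) := by
  intro j a r s
  rw [DL_apply]
  have hcom : ∀ i : ℕ, Coalgebra.comul (R := k) (g ^ i * a)
      = ((g ^ i) ⊗ₜ[k] (g ^ i)) * Coalgebra.comul (R := k) a := by
    intro i
    rw [Bialgebra.comul_mul, Bialgebra.comul_pow, hg.1, Algebra.TensorProduct.tmul_pow]
  simp only [P.mul_act, hcom]
  generalize Coalgebra.comul (R := k) a = t
  induction t using TensorProduct.induction_on with
  | zero => simp
  | tmul x y =>
    simp only [Algebra.TensorProduct.tmul_mul_tmul, TensorProduct.lift.tmul,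
      LinearMap.compl₁₂_apply, LinearMap.mul_apply', LinearMap.flip_apply,
      LinearMap.coe_comp, Function.comp_apply, LinearMap.mulLeft_apply]
    exact keylemma P.act g w q r s j x y
  | add t₁ t₂ ih₁ ih₂ =>
    simp only [mul_add, map_add, add_mul, smul_add, Finset.sum_add_distrib, ih₁, ih₂]
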